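/- Let $1 \le q < s < \infty$ and define $s(q)'$ by $1/s(q)' + 1/s = 1/q$. If $(x_j) = (\lambda_j u_j)$ with $(\lambda_j) \in \ell_{s(q)'}$ and $(u_j)$ weakly $s$-summable in $X$, then $(x_j)$ is anisotropic $(s,q,s)$-summable and $\|(x_j)\|_{A(s,q,s)} \le \|(\lambda_j)\|_{s(q)'} \cdot \|(u_j)\|_{w,s}$. Consequently, every mixed $(s;q)$-summable sequence is anisotropic $(s,q,s)$-summable with $\|(x_j)\|_{A(s,q,s)} \le \|(x_j)\|_{m(s;q)}$. -/

import Mathlib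

/-!
Let `x_j = λ_j u_j` and `(x_k^*) ∈ ℓ_s(X^*)`. Then `∑_k |x_k^*(x_j)|^s = |λ_j|^s τ_j` with
`τ_j = ∑_k |x_k^*(u_j)|^s`. Summing over `j` first (Tonelli) and using
`∑_j |x^*(u_j)|^s ≤ (‖u‖_{w,s} ‖x^*‖)^s`, which holds because the weak norm is finite by
Banach–Steinhaus on the Banach space `X^*`, gives `∑_j τ_j ≤ (‖u‖_{w,s} ‖(x_k^*)‖_s)^s`.
Hölder's inequality for `1/q = 1/s(q)' + 1/s` applied to `|λ_j|` and `τ_j^{1/s}` yields the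
bound, and taking the infimum over factorizations gives the bound by the mixed norm.
-/

open scoped BigOperators NNReal ENNReal

noncomputable section

/-- `(xs k)` belongs to `ℓ_r(X*)`. -/
def MemLr (r : ℝ) {X : Type*} [NormedAddCommGroup X] [NormedSpace ℝ X]
    (xs : ℕ → X →L[ℝ] ℝ) : Prop :=
  Summable fun k => ‖xs k‖ ^ r

/-- The `ℓ_r(X*)` norm. -/
noncomputable def lrNorm (r : ℝ) {X : Type*} [NormedAddCommGroup X] [NormedSpace ℝ X]
    (xs : ℕ → X →L[ℝ] ℝ) : ℝ :=
  (∑' k, ‖xs k‖ ^ r) ^ (1 / r)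

/-- Weakly `q`-summable sequences. -/
def WeaklySummable (q : ℝ) {X : Type*} [NormedAddCommGroup X] [NormedSpace ℝ X]
    (x : ℕ → X) : Prop :=
  ∀ f : X →L[ℝ] ℝ, Summable fun j => |f (x j)| ^ q

/-- The weak `ℓ_q` norm. -/
noncomputable def weakNorm (q : ℝ) {X : Type*} [NormedAddCommGroup X] [NormedSpace ℝ X]
    (x : ℕ → X) : ℝ :=
  ⨆ f : {f : X →L[ℝ] ℝ // ‖f‖ ≤ 1}, (∑' j, |f.1 (x j)| ^ q) ^ (1 / q)

/-- Anisotropic `(s,q,r)`-summable sequences. -/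
def AnisoSummable (s q r : ℝ) {X : Type*} [NormedAddCommGroup X] [NormedSpace ℝ X]
    (x : ℕ → X) : Prop :=
  ∀ xs : ℕ → X →L[ℝ] ℝ, MemLr r xs →
    (∀ j, Summable fun k => |xs k (x j)| ^ s) ∧
      Summable fun j => (∑' k, |xs k (x j)| ^ s) ^ (q / s)

/-- The anisotropic `(s,q,r)` norm. -/
noncomputable def anisoNorm (s q r : ℝ) {X : Type*} [NormedAddCommGroup X] [NormedSpace ℝ X]
    (x : ℕ → X) : ℝ :=
  ⨆ xs : {xs : ℕ → X →L[ℝ] ℝ // MemLr r xs ∧ lrNorm r xs ≤ 1},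
    (∑' j, (∑' k, |xs.1 k (x j)| ^ s) ^ (q / s)) ^ (1 / q)

/-- The mixed `(s;q)` norm, as an infimum over factorizations. -/
noncomputable def mixedNormR (sq' s : ℝ) {X : Type*} [NormedAddCommGroup X] [NormedSpace ℝ X]
    (x : ℕ → X) : ℝ :=
  sInf {c : ℝ | ∃ lam : ℕ → ℝ, ∃ u : ℕ → X, (∀ j, x j = lam j • u j) ∧
    (Summable fun j => |lam j| ^ sq') ∧ WeaklySummable s u ∧
    c = (∑' j, |lam j| ^ sq') ^ (1 / sq') * weakNorm s u}

section WeakNorm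

variable {X : Type*} [NormedAddCommGroup X] [NormedSpace ℝ X] {s : ℝ} {u : ℕ → X}

def weakPartialSeminorm (hs : 1 ≤ s) (u : ℕ → X) (F : Finset ℕ) : Seminorm ℝ (X →L[ℝ] ℝ) where
  toFun f := (∑ j ∈ F, |f (u j)| ^ s) ^ (1 / s)
  map_zero' := by simp [Real.zero_rpow (by positivity : s ≠ 0),
    Real.zero_rpow (by positivity : s⁻¹ ≠ 0)]
  add_le' f g := by simpa using Real.Lp_add_le F (fun j => f (u j)) (fun j => g (u j)) hs
  neg' f := by simp
  smul' c f := by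
    have hs0 : 0 < s := by positivity
    simp only [FunLike.coe_smul, Pi.smul_apply, smul_eq_mul, abs_mul,
      Real.mul_rpow (abs_nonneg c) (abs_nonneg _), ← Finset.mul_sum]
    rw [Real.mul_rpow (by positivity) (by positivity), one_div,
      Real.rpow_rpow_inv (abs_nonneg c) hs0.ne', Real.norm_eq_abs]

theorem weakPartialSeminorm_apply (hs : 1 ≤ s) (F : Finset ℕ) (f : X →L[ℝ] ℝ) :
    weakPartialSeminorm hs u F f = (∑ j ∈ F, |f (u j)| ^ s) ^ (1 / s) :=
  rfl

theorem continuous_weakPartialSeminorm (hs : 1 ≤ s) (F : Finset ℕ) :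
    Continuous (weakPartialSeminorm hs u F) := by
  have hs0 : 0 < s := by positivity
  refine (Real.continuous_rpow_const (by positivity)).comp
    (continuous_finsetSum F fun j _ => (Real.continuous_rpow_const hs0.le).comp ?_)
  exact (ContinuousLinearMap.apply ℝ ℝ (u j)).continuous.abs

theorem WeaklySummable.weakPartialSeminorm_le (hs : 1 ≤ s) (hu : WeaklySummable s u)
    (F : Finset ℕ) (f : X →L[ℝ] ℝ) :
    weakPartialSeminorm hs u F f ≤ (∑' j, |f (u j)| ^ s) ^ (1 / s) :=
  Real.rpow_le_rpow (by positivity)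
    ((hu f).sum_le_tsum F fun j _ => by positivity) (by positivity)

theorem WeaklySummable.bddAbove_weakNorm (hs : 1 ≤ s) (hu : WeaklySummable s u) :
    BddAbove (Set.range fun f : {f : X →L[ℝ] ℝ // ‖f‖ ≤ 1} =>
      (∑' j, |f.1 (u j)| ^ s) ^ (1 / s)) := by
  have hs0 : 0 < s := by positivity
  set p := weakPartialSeminorm hs u
  have hbdd : BddAbove (Set.range p) :=
    Seminorm.bddAbove_range_iff.mpr fun f =>
      ⟨_, Set.forall_mem_range.mpr fun F => hu.weakPartialSeminorm_le hs F f⟩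
  -- Banach–Steinhaus: the dual `X →L[ℝ] ℝ` is complete, hence barrelled.
  have hcont : Continuous ((⨆ F, p F : Seminorm ℝ (X →L[ℝ] ℝ)) : (X →L[ℝ] ℝ) → ℝ) := by
    rw [Seminorm.coe_iSup_eq hbdd]
    exact Seminorm.continuous_iSup p (continuous_weakPartialSeminorm hs) hbdd
  obtain ⟨C, hC0, hC⟩ := Seminorm.bound_of_continuous_normedSpace _ hcont
  refine ⟨C, Set.forall_mem_range.mpr fun ⟨f, hf⟩ => ?_⟩
  have hpartial : ∀ F, p F f ≤ C := fun F => calc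
    p F f ≤ (⨆ F, p F : Seminorm ℝ (X →L[ℝ] ℝ)) f := by
      rw [Seminorm.coe_iSup_eq hbdd, iSup_apply]
      exact le_ciSup (Seminorm.bddAbove_range_iff.mp hbdd f) F
    _ ≤ C * ‖f‖ := hC f
    _ ≤ C := mul_le_of_le_one_right hC0.le hf
  have hsum : ∑' j, |f (u j)| ^ s ≤ C ^ s :=
    (hu f).tsum_le_of_sum_le fun F =>
      (Real.rpow_inv_le_iff_of_pos (by positivity) hC0.le hs0).mp
        (by simpa [p, weakPartialSeminorm_apply] using hpartial F)
  rwa [one_div, Real.rpow_inv_le_iff_of_pos (by positivity) hC0.le hs0]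

theorem weakNorm_nonneg : 0 ≤ weakNorm s u :=
  Real.iSup_nonneg fun _ => by positivity

theorem WeaklySummable.le_weakNorm (hs : 1 ≤ s) (hu : WeaklySummable s u) {f : X →L[ℝ] ℝ}
    (hf : ‖f‖ ≤ 1) : (∑' j, |f (u j)| ^ s) ^ (1 / s) ≤ weakNorm s u :=
  le_ciSup (hu.bddAbove_weakNorm hs) ⟨f, hf⟩

theorem rpow_tsum_abs_smul_apply (hs : 0 < s) (c : ℝ) (f : X →L[ℝ] ℝ) :
    (∑' j, |(c • f) (u j)| ^ s) ^ (1 / s) = |c| * (∑' j, |f (u j)| ^ s) ^ (1 / s) := by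
  simp only [FunLike.coe_smul, Pi.smul_apply, smul_eq_mul, abs_mul,
    Real.mul_rpow (abs_nonneg c) (abs_nonneg _), tsum_mul_left]
  rw [Real.mul_rpow (by positivity) (tsum_nonneg fun _ => by positivity), one_div,
    Real.rpow_rpow_inv (abs_nonneg c) hs.ne']

theorem WeaklySummable.rpow_tsum_le (hs : 1 ≤ s) (hu : WeaklySummable s u) (f : X →L[ℝ] ℝ) :
    (∑' j, |f (u j)| ^ s) ^ (1 / s) ≤ weakNorm s u * ‖f‖ := by
  rcases eq_or_ne f 0 with rfl | hf
  · simp [Real.zero_rpow (by positivity : s ≠ 0), Real.zero_rpow (by positivity : s⁻¹ ≠ 0)]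
  have hnorm : 0 < ‖f‖ := norm_pos_iff.mpr hf
  have hunit : ‖‖f‖⁻¹ • f‖ ≤ 1 := by
    rw [norm_smul, norm_inv, norm_norm, inv_mul_cancel₀ hnorm.ne']
  calc (∑' j, |f (u j)| ^ s) ^ (1 / s)
      = ‖f‖ * (∑' j, |(‖f‖⁻¹ • f) (u j)| ^ s) ^ (1 / s) := by
        rw [rpow_tsum_abs_smul_apply (by positivity), abs_inv, abs_norm,
          mul_inv_cancel_left₀ hnorm.ne']
    _ ≤ ‖f‖ * weakNorm s u := by gcongr; exact hu.le_weakNorm hs hunit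
    _ = weakNorm s u * ‖f‖ := mul_comm _ _

theorem WeaklySummable.tsum_le (hs : 1 ≤ s) (hu : WeaklySummable s u) (f : X →L[ℝ] ℝ) :
    ∑' j, |f (u j)| ^ s ≤ (weakNorm s u * ‖f‖) ^ s := by
  have := hu.rpow_tsum_le hs f
  rwa [one_div, Real.rpow_inv_le_iff_of_pos (tsum_nonneg fun _ => by positivity)
    (mul_nonneg weakNorm_nonneg (norm_nonneg f)) (by positivity)] at this

end WeakNorm

section Anisotropic

variable {X : Type*} [NormedAddCommGroup X] [NormedSpace ℝ X] {s : ℝ} {xs : ℕ → X →L[ℝ] ℝ}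

theorem MemLr.summable_abs_apply_rpow (hs : 0 ≤ s) (hxs : MemLr s xs) (y : X) :
    Summable fun k => |xs k y| ^ s := by
  refine Summable.of_nonneg_of_le (fun _ => by positivity) (fun k => ?_)
    ((hxs : Summable fun k => ‖xs k‖ ^ s).mul_left (‖y‖ ^ s))
  rw [← Real.mul_rpow (norm_nonneg _) (norm_nonneg _), mul_comm]
  exact Real.rpow_le_rpow (abs_nonneg _) ((xs k).le_opNorm y) hs

theorem lrNorm_rpow (hs : 0 < s) : lrNorm s xs ^ s = ∑' k, ‖xs k‖ ^ s := by
  rw [lrNorm, one_div, Real.rpow_inv_rpow (tsum_nonneg fun _ => by positivity) hs.ne']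

theorem WeaklySummable.summable_tsum_and_le {u : ℕ → X} (hs : 1 ≤ s) (hu : WeaklySummable s u)
    (hxs : MemLr s xs) :
    (Summable fun j => ∑' k, |xs k (u j)| ^ s) ∧
      ∑' j, ∑' k, |xs k (u j)| ^ s ≤ (weakNorm s u * lrNorm s xs) ^ s := by
  have hs0 : 0 < s := by positivity
  have hdom : Summable fun k => (weakNorm s u * ‖xs k‖) ^ s := by
    simp only [Real.mul_rpow weakNorm_nonneg (norm_nonneg _)]
    exact (hxs : Summable fun k => ‖xs k‖ ^ s).mul_left _
  have hprod : Summable (Function.uncurry fun k j => |xs k (u j)| ^ s) :=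
    (summable_prod_of_nonneg fun _ => Real.rpow_nonneg (abs_nonneg _) _).mpr ⟨fun k => hu (xs k),
      hdom.of_nonneg_of_le (fun _ => tsum_nonneg fun _ => Real.rpow_nonneg (abs_nonneg _) _)
        fun k => hu.tsum_le hs (xs k)⟩
  refine ⟨hprod.prod_symm.prod, ?_⟩
  calc ∑' j, ∑' k, |xs k (u j)| ^ s = ∑' k, ∑' j, |xs k (u j)| ^ s := hprod.tsum_comm
    _ ≤ ∑' k, (weakNorm s u * ‖xs k‖) ^ s :=
      hprod.prod.tsum_le_tsum (fun k => hu.tsum_le hs (xs k)) hdom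
    _ = (weakNorm s u * lrNorm s xs) ^ s := by
      simp only [Real.mul_rpow weakNorm_nonneg (norm_nonneg _), tsum_mul_left,
        Real.mul_rpow weakNorm_nonneg (by unfold lrNorm; positivity : 0 ≤ lrNorm s xs),
        lrNorm_rpow hs0]

theorem tsum_abs_apply_smul_rpow (hs : 0 < s) (c : ℝ) (y : X) :
    ∑' k, |xs k (c • y)| ^ s = (|c| * (∑' k, |xs k y| ^ s) ^ (1 / s)) ^ s := by
  have hτ : 0 ≤ ∑' k, |xs k y| ^ s := tsum_nonneg fun _ => by positivity
  simp only [map_smul, smul_eq_mul, abs_mul, Real.mul_rpow (abs_nonneg c) (abs_nonneg _),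
    tsum_mul_left]
  rw [Real.mul_rpow (abs_nonneg c) (by positivity), one_div, Real.rpow_inv_rpow hτ hs.ne']

theorem summable_and_rpow_tsum_le_of_factorization {r q : ℝ} (hT : r.HolderTriple s q)
    (hs : 1 ≤ s) {x u : ℕ → X} {lam : ℕ → ℝ} (hfac : ∀ j, x j = lam j • u j)
    (hlam : Summable fun j => |lam j| ^ r) (hu : WeaklySummable s u) (hxs : MemLr s xs) :
    (Summable fun j => (∑' k, |xs k (x j)| ^ s) ^ (q / s)) ∧
      (∑' j, (∑' k, |xs k (x j)| ^ s) ^ (q / s)) ^ (1 / q) ≤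
        (∑' j, |lam j| ^ r) ^ (1 / r) * (weakNorm s u * lrNorm s xs) := by
  have hs0 : 0 < s := by positivity
  obtain ⟨hτ, hτle⟩ := hu.summable_tsum_and_le hs hxs
  set g := fun j => (∑' k, |xs k (u j)| ^ s) ^ (1 / s)
  have hg : ∀ j, g j ^ s = ∑' k, |xs k (u j)| ^ s := fun j => by
    simp only [g]
    rw [one_div, Real.rpow_inv_rpow (tsum_nonneg fun _ => by positivity) hs0.ne']
  have hx : ∀ j, (∑' k, |xs k (x j)| ^ s) ^ (q / s) = (|lam j| * g j) ^ q := fun j => by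
    rw [hfac j, tsum_abs_apply_smul_rpow hs0, ← Real.rpow_mul (by positivity),
      mul_div_cancel₀ q hs0.ne']
  have hgs : Summable fun j => g j ^ s := by simpa only [hg] using hτ
  simp only [hx]
  refine ⟨Real.summable_Lr_of_Lp_Lq_of_nonneg hT (fun _ => abs_nonneg _)
    (fun _ => by positivity) hlam hgs, (Real.Lr_le_Lp_mul_Lq_tsum_of_nonneg hT
    (fun _ => abs_nonneg _) (fun _ => by positivity) hlam hgs).trans ?_⟩
  gcongr
  rw [tsum_congr hg, one_div, Real.rpow_inv_le_iff_of_pos (tsum_nonneg fun _ => by positivity)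
    (mul_nonneg weakNorm_nonneg (by unfold lrNorm; positivity)) hs0]
  exact hτle

variable {r q : ℝ} {x u : ℕ → X} {lam : ℕ → ℝ}

theorem anisoSummable_of_factorization (hT : r.HolderTriple s q) (hs : 1 ≤ s)
    (hfac : ∀ j, x j = lam j • u j) (hlam : Summable fun j => |lam j| ^ r)
    (hu : WeaklySummable s u) : AnisoSummable s q s x := fun _ hxs =>
  ⟨fun j => hxs.summable_abs_apply_rpow (by positivity) (x j),
    (summable_and_rpow_tsum_le_of_factorization hT hs hfac hlam hu hxs).1⟩

theorem anisoNorm_le_of_factorization (hT : r.HolderTriple s q) (hs : 1 ≤ s)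
    (hfac : ∀ j, x j = lam j • u j) (hlam : Summable fun j => |lam j| ^ r)
    (hu : WeaklySummable s u) :
    anisoNorm s q s x ≤ (∑' j, |lam j| ^ r) ^ (1 / r) * weakNorm s u := by
  have hA : 0 ≤ (∑' j, |lam j| ^ r) ^ (1 / r) := by positivity
  refine Real.iSup_le (fun ⟨xs, hxs, hball⟩ => ?_) (mul_nonneg hA weakNorm_nonneg)
  calc _ ≤ (∑' j, |lam j| ^ r) ^ (1 / r) * (weakNorm s u * lrNorm s xs) :=
        (summable_and_rpow_tsum_le_of_factorization hT hs hfac hlam hu hxs).2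
    _ ≤ (∑' j, |lam j| ^ r) ^ (1 / r) * (weakNorm s u * 1) := by
        gcongr; exact weakNorm_nonneg
    _ = (∑' j, |lam j| ^ r) ^ (1 / r) * weakNorm s u := by rw [mul_one]

end Anisotropic

theorem stmt10_general {X : Type*} [NormedAddCommGroup X] [NormedSpace ℝ X]
    {s q sq' : ℝ} (hq : 1 ≤ q) (hqs : q < s) (hsq' : 1 / sq' + 1 / s = 1 / q)
    (x : ℕ → X) (lam : ℕ → ℝ) (u : ℕ → X)
    (hfac : ∀ j, x j = lam j • u j)
    (hlam : Summable fun j => |lam j| ^ sq') (hu : WeaklySummable s u) :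
    AnisoSummable s q s x ∧
      anisoNorm s q s x ≤ (∑' j, |lam j| ^ sq') ^ (1 / sq') * weakNorm s u ∧
        anisoNorm s q s x ≤ mixedNormR sq' s x := by
  have hs : 1 ≤ s := hq.trans hqs.le
  have hT : sq'.HolderTriple s q := by
    have hsq'_pos : 0 < 1 / sq' := by
      have : 1 / s < 1 / q := one_div_lt_one_div_of_lt (by positivity) hqs
      linarith
    exact ⟨by simpa only [one_div] using hsq', one_div_pos.mp hsq'_pos, by positivity⟩
  refine ⟨anisoSummable_of_factorization hT hs hfac hlam hu,
    anisoNorm_le_of_factorization hT hs hfac hlam hu, ?_⟩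
  refine le_csInf ⟨_, lam, u, hfac, hlam, hu, rfl⟩ ?_
  rintro _ ⟨lam', u', hfac', hlam', hu', rfl⟩
  exact anisoNorm_le_of_factorization hT hs hfac' hlam' hu'

theorem stmt10 {X : Type*} [NormedAddCommGroup X] [NormedSpace ℝ X] [CompleteSpace X]
    {s q sq' : ℝ} (hq : 1 ≤ q) (hqs : q < s) (hsq' : 1 / sq' + 1 / s = 1 / q)
    (x : ℕ → X) (lam : ℕ → ℝ) (u : ℕ → X)
    (hfac : ∀ j, x j = lam j • u j)
    (hlam : Summable fun j => |lam j| ^ sq') (hu : WeaklySummable s u) :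
    AnisoSummable s q s x ∧
      anisoNorm s q s x ≤ (∑' j, |lam j| ^ sq') ^ (1 / sq') * weakNorm s u ∧
        anisoNorm s q s x ≤ mixedNormR sq' s x :=
  stmt10_general hq hqs hsq' x lam u hfac hlam hu
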